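/- arXiv:1503.07705 — 3 statements merged into one kernel-verified Lean document; each statement's English description precedes it below -/
import Mathlib

section
/- Let f = Σ_{j=0}^d a_j X^j be a real polynomial of degree d ≥ 2 all of whose roots are real. Then for every i ∈ {1,...,d-1}, a_i^2 ≥ ((d-i+1)/(d-i)) · ((i+1)/i) · a_{i-1} a_{i+1}. -/
/-!
Differentiate `f` `i - 1` times, reverse it, and differentiate `d - i - 1` more times: what is
left is a quadratic whose coefficients are `a_{i+1}, a_i, a_{i-1}` up to factorial factors. By
Rolle's theorem derivatives of a real-rooted polynomial are real-rooted, and reversal keeps real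
roots real (it inverts the nonzero ones), so this quadratic has a real root and hence a
nonnegative discriminant, which is Newton's inequality with its denominators cleared.
-/

open Polynomial
open scoped Nat

namespace Polynomial

theorem natDegree_iterate_derivative_eq {R : Type*} [Semiring R] [IsAddTorsionFree R]
    (p : R[X]) (k : ℕ) : (derivative^[k] p).natDegree = p.natDegree - k := by
  induction k with
  | zero => rfl
  | succ k ih => rw [Function.iterate_succ_apply', natDegree_derivative, ih, Nat.sub_sub]

theorem Splits.derivative {p : ℝ[X]} (hp : p.Splits) : (Polynomial.derivative p).Splits := by
  rw [splits_iff_card_roots] at hp ⊢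
  have := p.card_roots_le_derivative
  have := (Polynomial.derivative p).card_roots'
  rw [natDegree_derivative] at this ⊢
  omega

theorem Splits.iterate_derivative {p : ℝ[X]} (hp : p.Splits) (n : ℕ) :
    (Polynomial.derivative^[n] p).Splits := by
  induction n with
  | zero => exact hp
  | succ n ih => rw [Function.iterate_succ_apply']; exact ih.derivative

theorem Splits.reverse {K : Type*} [Field K] {p : K[X]} (hp : p.Splits) : p.reverse.Splits := by
  induction hp using Submonoid.closure_induction with
  | mem g hg =>
    refine Splits.of_natDegree_le_one ((reverse_natDegree_le g).trans ?_)
    rcases hg with ⟨a, rfl⟩ | ⟨a, rfl⟩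
    · exact (natDegree_C a).trans_le zero_le_one
    · exact (natDegree_X_add_C a).le
  | one => rw [← C_1, reverse_C]; exact Splits.C 1
  | mul f g _ _ hf hg => rw [reverse_mul_of_domain]; exact hf.mul hg

theorem Splits.discrim_coeff_nonneg {K : Type*} [Field K] [LinearOrder K] [IsOrderedRing K]
    {q : K[X]} (hq : q.Splits) (hdeg : q.natDegree ≤ 2) :
    0 ≤ discrim (q.coeff 2) (q.coeff 1) (q.coeff 0) := by
  by_cases h2 : q.coeff 2 = 0
  · rw [discrim, h2]; simpa using sq_nonneg (q.coeff 1)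
  have hdeg2 : q.natDegree = 2 := le_antisymm hdeg (le_natDegree_of_ne_zero h2)
  obtain ⟨x, hx⟩ := hq.exists_eval_eq_zero (by
    rw [degree_eq_natDegree (by rintro rfl; simp at h2), hdeg2]; decide)
  rw [eval_eq_sum_range, hdeg2] at hx
  simp only [Finset.sum_range_succ, Finset.sum_range_zero] at hx
  rw [discrim_eq_sq_of_quadratic_eq_zero (x := x) (by linear_combination hx)]
  exact sq_nonneg _

theorem coeff_iterate_derivative_reverse {R : Type*} [Semiring R] {g : R[X]} {k n m : ℕ}
    (hg : g.natDegree = k + 2) (hnm : n + m = 2) :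
    (derivative^[k] g.reverse).coeff n = (n + k).descFactorial k • g.coeff m := by
  rw [coeff_iterate_derivative, coeff_reverse, hg, revAt_le (by omega)]
  congr 2
  omega

theorem Splits.newton_inequality {f : ℝ[X]} (hf : f.Splits) {j k : ℕ}
    (hdeg : f.natDegree = j + k + 2) :
    ((k + 2) * (j + 2) : ℝ) * (f.coeff j * f.coeff (j + 2)) ≤
      ((k + 1) * (j + 1)) * f.coeff (j + 1) ^ 2 := by
  set g := Polynomial.derivative^[j] f
  set q := Polynomial.derivative^[k] g.reverse
  have hgdeg : g.natDegree = k + 2 := by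
    rw [natDegree_iterate_derivative_eq, hdeg]; omega
  have hqdeg : q.natDegree ≤ 2 :=
    (natDegree_iterate_derivative _ k).trans (by have := reverse_natDegree_le g; omega)
  have hcoeff : ∀ n m, n + m = 2 → q.coeff n =
      ((n + k).descFactorial k : ℝ) * ((m + j).descFactorial j) * f.coeff (m + j) := by
    intro n m hnm
    rw [coeff_iterate_derivative_reverse hgdeg hnm, coeff_iterate_derivative, nsmul_eq_mul,
      nsmul_eq_mul, mul_assoc]
  have hD : ∀ m n, ((m + n).descFactorial n : ℝ) = (m + n)! / m ! := by
    intro m n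
    rw [eq_div_iff (by positivity), mul_comm]
    exact_mod_cast by simpa using Nat.factorial_mul_descFactorial (Nat.le_add_left n m)
  have hq : q.Splits := (hf.iterate_derivative j).reverse.iterate_derivative k
  have hdisc := hq.discrim_coeff_nonneg hqdeg
  rw [discrim, hcoeff 0 2 rfl, hcoeff 1 1 rfl, hcoeff 2 0 rfl] at hdisc
  simp only [zero_add, Nat.descFactorial_self] at hdisc
  rw [hD 1 k, hD 2 k, hD 1 j, hD 2 j, add_comm 1 k, add_comm 2 k, add_comm 1 j, add_comm 2 j]
    at hdisc
  simp only [Nat.factorial_succ, Nat.cast_mul, Nat.cast_add, Nat.cast_one] at hdisc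
  rw [← sub_nonneg]
  -- the discriminant of `q` is this positive factor times the difference of the two sides
  refine nonneg_of_mul_nonneg_right
    (a := ((k + 1) * (j + 1) * (k ! * j !) ^ 2 : ℝ)) ?_ (by positivity)
  convert hdisc using 1
  field_simp
  ring

end Polynomial

theorem newton_inequalities_general (f : Polynomial ℝ) (d : ℕ) (hd : f.natDegree = d)
    (hroots : (f.roots).card = d) :
    ∀ i : ℕ, 1 ≤ i → i ≤ d - 1 →
      (f.coeff i) ^ 2 ≥
        (((d - i + 1 : ℕ) : ℝ) / ((d - i : ℕ) : ℝ)) * (((i + 1 : ℕ) : ℝ) / (i : ℝ)) *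
          (f.coeff (i - 1) * f.coeff (i + 1)) := by
  intro i hi1 hi2
  obtain ⟨j, rfl⟩ : ∃ j, i = j + 1 := ⟨i - 1, by omega⟩
  obtain ⟨k, rfl⟩ : ∃ k, d = j + k + 2 := ⟨d - j - 2, by omega⟩
  have hf : f.Splits := splits_iff_card_roots.mpr (hroots.trans hd.symm)
  have hnewton := hf.newton_inequality hd
  rw [show j + k + 2 - (j + 1) + 1 = k + 2 by omega, show j + k + 2 - (j + 1) = k + 1 by omega,
    Nat.add_sub_cancel, ge_iff_le, div_mul_div_comm, div_mul_eq_mul_div,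
    div_le_iff₀ (by positivity)]
  push_cast
  linarith

/-- Newton's inequalities: if all roots of a real polynomial of degree `d ≥ 2` are real,
then `a_i^2 ≥ ((d-i+1)/(d-i)) * ((i+1)/i) * a_{i-1} a_{i+1}` for `1 ≤ i ≤ d-1`. -/
theorem newton_inequalities (f : Polynomial ℝ) (d : ℕ) (hd : f.natDegree = d) (hd2 : 2 ≤ d)
    (hroots : (f.roots).card = d) :
    ∀ i : ℕ, 1 ≤ i → i ≤ d - 1 →
      (f.coeff i) ^ 2 ≥
        (((d - i + 1 : ℕ) : ℝ) / ((d - i : ℕ) : ℝ)) * (((i + 1 : ℕ) : ℝ) / (i : ℝ)) *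
          (f.coeff (i - 1) * f.coeff (i + 1)) :=
  newton_inequalities_general f d hd hroots
end

section
/- Let f = Σ_{i=0}^d a_i X^i ∈ ℝ⁺[X] of degree d, with f = Σ_{i=1}^k Π_{j=1}^m f_{i,j} where each f_{i,j} ∈ ℝ⁺[X]. If a_i^2 > k² d^{2m} a_{i-1} a_{i+1} for all i ∈ {1,...,d-1}, then some polynomial f_{i,j} has at least d/(km) nonzero monomials. -/
/-!
Write `a_i` for the coefficients of `f` and `g_i = ∏_j f_{i,j}`. For every `1 ≤ n ≤ d` some
`g_i` carries at least a `1/k` share of `a_n`, and that coefficient of `g_i` is a sum of at most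
`d^m` products `∏_j [X^{l_j}] f_{i,j}`, so one of them, the dominant tuple `l(n)`, is at least
`a_n / (k d^m)`. If `n < n'` are two degrees dominated by the same `g_i`, then `l(n) ≤ l(n')`
coordinatewise: otherwise the pointwise minimum and maximum of `l(n)` and `l(n')` have degrees
`p < n ≤ n' < q` with `p + q = n + n'`, their products multiply to the same number, and we get
`a_n a_{n'} ≤ k² d^{2m} a_p a_q`, contradicting the strong log-concavity of the `a_i`, which
propagates from neighbours to all such pairs. A strictly increasing chain of tuples in
`∏_j supp f_{i,j}` has at most `∑_j #supp f_{i,j}` elements, so summing over `i` gives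
`d ≤ ∑_{i,j} #supp f_{i,j}`.
-/

open Polynomial Finset

@[to_additive]
theorem Fintype.prod_inf_mul_prod_sup {ι α M : Type*} [Fintype ι] [LinearOrder α] [CommMonoid M]
    (c : ι → α → M) (l l' : ι → α) :
    (∏ j, c j ((l ⊓ l') j)) * ∏ j, c j ((l ⊔ l') j) =
      (∏ j, c j (l j)) * ∏ j, c j (l' j) := by
  simp only [← prod_mul_distrib]
  refine Fintype.prod_congr _ _ fun j => ?_
  rcases le_total (l j) (l' j) with h | h <;> simp [h, mul_comm]

theorem Finset.card_le_sum_card_of_strictMonoOn_pi {ι α β : Type*} [Fintype ι] [Nonempty ι]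
    [Preorder α] [LinearOrder β] (t : ι → Finset α) (s : Finset β) (e : β → ι → α)
    (he : ∀ n ∈ s, ∀ j, e n j ∈ t j) (hmono : StrictMonoOn e s) : #s ≤ ∑ j, #(t j) := by
  classical
  set φ : β → ℕ := fun n => ∑ j, #{x ∈ t j | x ≤ e n j}
  have hφ : StrictMonoOn φ s := by
    intro n hn n' hn' hlt
    obtain ⟨hle, j, hj⟩ := Pi.lt_def.1 (hmono hn hn' hlt)
    have hsub (i : ι) : {x ∈ t i | x ≤ e n i} ⊆ {x ∈ t i | x ≤ e n' i} :=
      monotone_filter_right _ fun x _ hx => hx.trans (hle i)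
    refine sum_lt_sum (fun i _ => card_le_card (hsub i)) ⟨j, mem_univ j, card_lt_card ?_⟩
    exact (ssubset_iff_of_subset (hsub j)).2
      ⟨e n' j, mem_filter.2 ⟨he n' hn' j, le_rfl⟩, fun h => (mem_filter.1 h).2.not_gt hj⟩
  have hφ_mem (n : β) (hn : n ∈ s) : φ n ∈ Icc 1 (∑ j, #(t j)) := by
    obtain ⟨j⟩ := ‹Nonempty ι›
    have hj : 0 < #{x ∈ t j | x ≤ e n j} :=
      card_pos.2 ⟨e n j, mem_filter.2 ⟨he n hn j, le_rfl⟩⟩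
    exact mem_Icc.2 ⟨hj.trans_le (single_le_sum (f := fun i => #{x ∈ t i | x ≤ e n i})
      (fun i _ => Nat.zero_le _) (mem_univ j)), sum_le_sum fun i _ => card_filter_le _ _⟩
  simpa using card_le_card_of_injOn φ hφ_mem hφ.injOn

theorem Finset.card_le_sum_card_filter_le_card_mul {α ι : Type*} [Fintype ι] [Nonempty ι]
    (s : Finset α) (a : α → ℝ) (b : ι → α → ℝ) (hab : ∀ x, a x = ∑ i, b i x) :
    #s ≤ ∑ i, #{x ∈ s | a x ≤ Fintype.card ι * b i x} := by
  classical
  refine (card_le_card fun x hx => ?_).trans card_biUnion_le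
  obtain ⟨i, -, hi⟩ := exists_le_of_sum_le univ_nonempty (f := fun _ : ι => a x)
    (g := fun i => Fintype.card ι * b i x) (by simp [← mul_sum, ← hab])
  exact mem_biUnion.2 ⟨i, mem_univ i, mem_filter.2 ⟨hx, hi⟩⟩

namespace Polynomial

variable {ι R : Type*} [Fintype ι]

theorem coeff_prod_eq_sum_piFinset [DecidableEq ι] [CommSemiring R] (G : ι → R[X]) (n : ℕ) :
    (∏ j, G j).coeff n =
      ∑ l ∈ Fintype.piFinset (fun j => (G j).support) with ∑ j, l j = n,
        ∏ j, (G j).coeff (l j) := by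
  conv_lhs => rw [prod_congr rfl fun j _ => (G j).as_sum_support_C_mul_X_pow]
  simp only [prod_univ_sum, prod_mul_distrib, ← map_prod, prod_pow_eq_pow_sum, finsetSum_coeff,
    coeff_C_mul_X_pow, sum_filter, eq_comm]

section OrderedSemiring

variable [CommSemiring R] [PartialOrder R] [IsOrderedRing R] {G : ι → R[X]}

theorem coeff_prod_nonneg (hG : ∀ j n, 0 ≤ (G j).coeff n) (n : ℕ) :
    0 ≤ (∏ j, G j).coeff n := by
  classical
  rw [coeff_prod_eq_sum_piFinset]
  exact sum_nonneg fun l _ => prod_nonneg fun j _ => hG j _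

theorem prod_coeff_le_coeff_prod (hG : ∀ j n, 0 ≤ (G j).coeff n) (l : ι → ℕ) :
    ∏ j, (G j).coeff (l j) ≤ (∏ j, G j).coeff (∑ j, l j) := by
  classical
  by_cases hl : ∀ j, l j ∈ (G j).support
  · have hmem :
        l ∈ {l' ∈ Fintype.piFinset (fun j => (G j).support) | ∑ j, l' j = ∑ j, l j} := by
      simpa using hl
    rw [coeff_prod_eq_sum_piFinset]
    exact single_le_sum (f := fun l : ι → ℕ => ∏ j, (G j).coeff (l j))
      (fun l _ => prod_nonneg fun j _ => hG j _) hmem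
  · obtain ⟨j, hj⟩ := not_forall.1 hl
    rw [prod_eq_zero (mem_univ j) (notMem_support_iff.1 hj)]
    exact coeff_prod_nonneg hG _

end OrderedSemiring

theorem exists_coeff_prod_le_card_mul_prod_coeff [CommSemiring R] [LinearOrder R]
    [IsOrderedRing R] {G : ι → R[X]} (hG : ∀ j n, 0 ≤ (G j).coeff n) {n : ℕ}
    (hn : (∏ j, G j).coeff n ≠ 0) :
    ∃ l : ι → ℕ, (∀ j, l j ∈ (G j).support) ∧ ∑ j, l j = n ∧
      (∏ j, G j).coeff n ≤ (∏ j, #(G j).support : ℕ) * ∏ j, (G j).coeff (l j) := by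
  classical
  set T := {l ∈ Fintype.piFinset (fun j => (G j).support) | ∑ j, l j = n}
  have hT : T.Nonempty := by
    by_contra h
    rw [not_nonempty_iff_eq_empty] at h
    simp [coeff_prod_eq_sum_piFinset, T, h] at hn
  obtain ⟨l, hl, hmax⟩ := exists_max_image T (fun l => ∏ j, (G j).coeff (l j)) hT
  obtain ⟨hl, hsum⟩ := mem_filter.1 hl
  refine ⟨l, Fintype.mem_piFinset.1 hl, hsum, ?_⟩
  calc (∏ j, G j).coeff n ≤ #T • ∏ j, (G j).coeff (l j) := by
        rw [coeff_prod_eq_sum_piFinset]; exact sum_le_card_nsmul _ _ _ hmax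
    _ ≤ (∏ j, #(G j).support : ℕ) * ∏ j, (G j).coeff (l j) := by
        rw [nsmul_eq_mul, ← Fintype.card_piFinset]
        gcongr
        · exact prod_nonneg fun j _ => hG j _
        · exact filter_subset _ _

structure IsStronglyLogConcave (C : ℝ) (f : ℝ[X]) : Prop where
  coeff_nonneg : ∀ i, 0 ≤ f.coeff i
  mul_lt_sq :
    ∀ i, i + 2 ≤ f.natDegree → C * (f.coeff i * f.coeff (i + 2)) < f.coeff (i + 1) ^ 2

namespace IsStronglyLogConcave

variable {C : ℝ} {f : ℝ[X]}

theorem coeff_pos (hf : IsStronglyLogConcave C f) (hC : 0 ≤ C) {i : ℕ} (hi : 1 ≤ i)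
    (hid : i ≤ f.natDegree) : 0 < f.coeff i := by
  refine (hf.coeff_nonneg i).lt_of_ne' fun h0 => ?_
  rcases hid.lt_or_eq with hlt | rfl
  · obtain ⟨j, rfl⟩ : ∃ j, i = j + 1 := ⟨i - 1, by omega⟩
    have := hf.mul_lt_sq j (by omega)
    rw [h0] at this
    nlinarith [mul_nonneg hC (mul_nonneg (hf.coeff_nonneg j) (hf.coeff_nonneg (j + 2)))]
  · exact leadingCoeff_ne_zero.2 (ne_zero_of_natDegree_gt hi) h0

theorem mul_lt_mul_succ_pred (hf : IsStronglyLogConcave C f) (hC : 1 ≤ C) {p q : ℕ}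
    (hpq : p + 2 ≤ q) (hq : q ≤ f.natDegree) :
    C * (f.coeff p * f.coeff q) < f.coeff (p + 1) * f.coeff (q - 1) := by
  obtain ⟨j, rfl⟩ : ∃ j, q = p + j + 2 := ⟨q - p - 2, by omega⟩
  rw [show p + j + 2 - 1 = p + j + 1 by omega]
  induction j generalizing p with
  | zero => simpa [sq] using hf.mul_lt_sq p hq
  | succ j ih =>
    have hbase := hf.mul_lt_sq p (by omega)
    have hnext := ih (p := p + 1) (by omega) (by omega)
    rw [show p + 1 + j + 2 = p + (j + 1) + 2 by omega,
      show p + 1 + j + 1 = p + (j + 1) + 1 by omega, show p + 1 + 1 = p + 2 by omega] at hnext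
    have ha₁ := hf.coeff_pos (by linarith) (i := p + 1) (by omega) (by omega)
    have ha₂ := hf.coeff_pos (by linarith) (i := p + 2) (by omega) (by omega)
    have hweak : f.coeff (p + 1) * f.coeff (p + (j + 1) + 2) ≤
        C * (f.coeff (p + 1) * f.coeff (p + (j + 1) + 2)) :=
      le_mul_of_one_le_left (mul_nonneg ha₁.le (hf.coeff_nonneg _)) hC
    -- multiply through by `a_{p+2}`: the base case for `p` and, weakened via `1 ≤ C`, the
    -- induction hypothesis for `p + 1` chain together, and `a_{p+2}` cancels
    refine lt_of_mul_lt_mul_right (a := f.coeff (p + 2)) ?_ ha₂.le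
    calc C * (f.coeff p * f.coeff (p + (j + 1) + 2)) * f.coeff (p + 2)
        = C * (f.coeff p * f.coeff (p + 2)) * f.coeff (p + (j + 1) + 2) := by ring
      _ ≤ f.coeff (p + 1) ^ 2 * f.coeff (p + (j + 1) + 2) := by
        gcongr
        exact hf.coeff_nonneg _
      _ = f.coeff (p + 1) * (f.coeff (p + 1) * f.coeff (p + (j + 1) + 2)) := by ring
      _ < f.coeff (p + 1) * (f.coeff (p + 2) * f.coeff (p + (j + 1) + 1)) :=
        mul_lt_mul_of_pos_left (hweak.trans_lt hnext) ha₁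
      _ = _ := by ring

theorem mul_lt_mul_of_add_eq (hf : IsStronglyLogConcave C f) (hC : 1 ≤ C) {p q n n' : ℕ}
    (hpn : p < n) (hnn' : n ≤ n') (hn' : n' ≤ f.natDegree) (hsum : p + q = n + n') :
    C * (f.coeff p * f.coeff q) < f.coeff n * f.coeff n' := by
  rcases le_or_gt q f.natDegree with hq | hq
  swap
  · rw [coeff_eq_zero_of_natDegree_lt hq, mul_zero, mul_zero]
    exact mul_pos (hf.coeff_pos (by linarith) (by omega) (by omega))
      (hf.coeff_pos (by linarith) (by omega) hn')
  obtain ⟨j, rfl⟩ : ∃ j, n = p + 1 + j := ⟨n - p - 1, by omega⟩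
  induction j generalizing p q with
  | zero =>
    simpa [show q - 1 = n' by omega] using hf.mul_lt_mul_succ_pred hC (by omega) hq
  | succ j ih =>
    calc C * (f.coeff p * f.coeff q) < f.coeff (p + 1) * f.coeff (q - 1) :=
          hf.mul_lt_mul_succ_pred hC (by omega) hq
      _ ≤ C * (f.coeff (p + 1) * f.coeff (q - 1)) :=
        le_mul_of_one_le_left (mul_nonneg (hf.coeff_nonneg _) (hf.coeff_nonneg _)) hC
      _ < _ := by
        have := ih (p := p + 1) (q := q - 1) (by omega) (by omega) (by omega) (by omega)
        rwa [show p + 1 + 1 + j = p + 1 + (j + 1) by omega] at this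

theorem le_of_coeff_le_mul_prod_coeff (hf : IsStronglyLogConcave C f) (hC : 1 ≤ C)
    {G : ι → ℝ[X]} (hG : ∀ j n, 0 ≤ (G j).coeff n) (hGf : ∀ n, (∏ j, G j).coeff n ≤ f.coeff n)
    {B : ℝ} (hB : B ^ 2 ≤ C) {n n' : ℕ} (hnn' : n ≤ n') (hn' : n' ≤ f.natDegree)
    {l l' : ι → ℕ} (hl : ∑ j, l j = n) (hl' : ∑ j, l' j = n')
    (hbl : f.coeff n ≤ B * ∏ j, (G j).coeff (l j))
    (hbl' : f.coeff n' ≤ B * ∏ j, (G j).coeff (l' j)) :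
    l ≤ l' := by
  by_contra hll'
  set p := ∑ j, (l ⊓ l') j
  set q := ∑ j, (l ⊔ l') j
  have hpq : p + q = n + n' := by
    rw [← hl, ← hl']; exact Fintype.sum_inf_add_sum_sup (fun _ x => x) l l'
  have hpn : p < n := hl ▸ Fintype.sum_strictMono (inf_lt_left.2 hll')
  have hCpos : 0 ≤ C := (sq_nonneg B).trans hB
  have hprod_le (l₀ : ι → ℕ) : ∏ j, (G j).coeff (l₀ j) ≤ f.coeff (∑ j, l₀ j) :=
    (prod_coeff_le_coeff_prod hG l₀).trans (hGf _)
  have hprod_nonneg (l₀ : ι → ℕ) : 0 ≤ ∏ j, (G j).coeff (l₀ j) :=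
    prod_nonneg fun j _ => hG j _
  have := calc f.coeff n * f.coeff n'
      ≤ (B * ∏ j, (G j).coeff (l j)) * (B * ∏ j, (G j).coeff (l' j)) :=
        mul_le_mul hbl hbl' (hf.coeff_nonneg n') ((hf.coeff_nonneg n).trans hbl)
    _ = B ^ 2 * ((∏ j, (G j).coeff ((l ⊓ l') j)) * ∏ j, (G j).coeff ((l ⊔ l') j)) := by
        rw [Fintype.prod_inf_mul_prod_sup (fun j => (G j).coeff)]; ring
    _ ≤ C * (f.coeff p * f.coeff q) :=
        mul_le_mul hB
          (mul_le_mul (hprod_le _) (hprod_le _) (hprod_nonneg _) (hf.coeff_nonneg p))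
          (mul_nonneg (hprod_nonneg _) (hprod_nonneg _)) hCpos
    _ < f.coeff n * f.coeff n' := hf.mul_lt_mul_of_add_eq hC hpn hnn' hn' hpq
  exact lt_irrefl _ this

theorem card_filter_le_sum_card_support (hf : IsStronglyLogConcave C f) (hC : 1 ≤ C)
    [Nonempty ι] {G : ι → ℝ[X]} (hG : ∀ j n, 0 ≤ (G j).coeff n)
    (hGf : ∀ n, (∏ j, G j).coeff n ≤ f.coeff n) {K : ℝ} (hK : 0 ≤ K)
    (hKC : (K * (∏ j, #(G j).support : ℕ)) ^ 2 ≤ C) :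
    #{n ∈ Icc 1 f.natDegree | f.coeff n ≤ K * (∏ j, G j).coeff n} ≤ ∑ j, #(G j).support := by
  set S := {n ∈ Icc 1 f.natDegree | f.coeff n ≤ K * (∏ j, G j).coeff n}
  have hdom : ∀ n ∈ S, ∃ l : ι → ℕ, (∀ j, l j ∈ (G j).support) ∧ ∑ j, l j = n ∧
      f.coeff n ≤ (K * (∏ j, #(G j).support : ℕ)) * ∏ j, (G j).coeff (l j) := by
    intro n hn
    obtain ⟨hnd, hnK⟩ := mem_filter.1 hn
    obtain ⟨hn1, hnd⟩ := mem_Icc.1 hnd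
    have hcoeff : (∏ j, G j).coeff n ≠ 0 := fun h0 => by
      have := hf.coeff_pos (by linarith) hn1 hnd
      rw [h0, mul_zero] at hnK
      linarith
    obtain ⟨l, hl, hsum, hle⟩ := exists_coeff_prod_le_card_mul_prod_coeff hG hcoeff
    exact ⟨l, hl, hsum, hnK.trans (by rw [mul_assoc]; exact mul_le_mul_of_nonneg_left hle hK)⟩
  choose! e he_mem he_sum he_le using hdom
  refine card_le_sum_card_of_strictMonoOn_pi _ S e he_mem ?_
  intro n hn n' hn' hlt
  have hn'd := (mem_Icc.1 (mem_filter.1 hn').1).2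
  refine lt_of_le_of_ne (hf.le_of_coeff_le_mul_prod_coeff hC hG hGf hKC hlt.le hn'd
    (he_sum n hn) (he_sum n' hn') (he_le n hn) (he_le n' hn')) fun h => ?_
  have := he_sum n hn
  rw [h, he_sum n' hn'] at this
  omega

theorem natDegree_le_sum_sum_card_support {κ : Type*} [Fintype κ] [Nonempty κ] [Nonempty ι]
    (hf : IsStronglyLogConcave C f) (hC : 1 ≤ C) {F : κ → ι → ℝ[X]}
    (hF : f = ∑ i, ∏ j, F i j) (hFnonneg : ∀ i j n, 0 ≤ (F i j).coeff n)
    (hKC : ∀ i, ((Fintype.card κ : ℝ) * (∏ j, #(F i j).support : ℕ)) ^ 2 ≤ C) :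
    f.natDegree ≤ ∑ i, ∑ j, #(F i j).support := by
  have hprod_le (i : κ) (n : ℕ) : (∏ j, F i j).coeff n ≤ f.coeff n := by
    rw [hF, finsetSum_coeff]
    exact single_le_sum (fun i _ => coeff_prod_nonneg (hFnonneg i) n) (mem_univ i)
  calc f.natDegree = #(Icc 1 f.natDegree) := by simp
    _ ≤ ∑ i, #{n ∈ Icc 1 f.natDegree |
          f.coeff n ≤ Fintype.card κ * (∏ j, F i j).coeff n} :=
      card_le_sum_card_filter_le_card_mul _ f.coeff (fun i n => (∏ j, F i j).coeff n)
        fun n => by rw [hF, finsetSum_coeff]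
    _ ≤ ∑ i, ∑ j, #(F i j).support := sum_le_sum fun i _ =>
      hf.card_filter_le_sum_card_support hC (hFnonneg i) (hprod_le i) (Nat.cast_nonneg _)
        (hKC i)

end IsStronglyLogConcave

end Polynomial

/-- Proposition 3.2: if `f = Σ_{i<k} Π_{j<m} f_{i,j}` with nonnegative coefficients has
degree `d` and satisfies `a_i² > k²·d^{2m}·a_{i-1}·a_{i+1}` for all interior `i`, then
some `f_{i,j}` has at least `d/(km)` monomials. -/
theorem some_factor_many_monomials (k m d : ℕ) (hk : 0 < k) (hm : 0 < m) (f : Polynomial ℝ) (hdeg : f.natDegree = d)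
    (F : Fin k → Fin m → Polynomial ℝ)
    (hf : f = ∑ i : Fin k, ∏ j : Fin m, F i j)
    (hFnonneg : ∀ i j n, 0 ≤ (F i j).coeff n)
    (hnonneg : ∀ n, 0 ≤ f.coeff n)
    (hlc : ∀ i : ℕ, 1 ≤ i → i ≤ d - 1 →
      (f.coeff i) ^ 2 > (k : ℝ) ^ 2 * (d : ℝ) ^ (2 * m) * (f.coeff (i - 1) * f.coeff (i + 1))) :
    ∃ i : Fin k, ∃ j : Fin m, (d : ℝ) / ((k : ℝ) * (m : ℝ)) ≤ ((F i j).support.card : ℝ) := by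
  subst hdeg
  rcases Nat.eq_zero_or_pos f.natDegree with hd | hd
  · exact ⟨⟨0, hk⟩, ⟨0, hm⟩, by simp [hd]⟩
  by_cases hbig : ∃ i j, f.natDegree < #(F i j).support
  · obtain ⟨i, j, h⟩ := hbig
    have hkm : (1 : ℝ) ≤ k * m := by exact_mod_cast Nat.mul_pos hk hm
    exact ⟨i, j, (div_le_self (Nat.cast_nonneg _) hkm).trans (by exact_mod_cast h.le)⟩
  push Not at hbig
  have : Nonempty (Fin k) := ⟨⟨0, hk⟩⟩
  have : Nonempty (Fin m) := ⟨⟨0, hm⟩⟩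
  have hC : (1 : ℝ) ≤ k ^ 2 * f.natDegree ^ (2 * m) :=
    one_le_mul_of_one_le_of_one_le (one_le_pow₀ (by exact_mod_cast hk))
      (one_le_pow₀ (by exact_mod_cast hd))
  have hslc : f.IsStronglyLogConcave (k ^ 2 * f.natDegree ^ (2 * m)) :=
    ⟨hnonneg, fun i hi => by simpa using hlc (i + 1) (by omega) (by omega)⟩
  have hKC (i : Fin k) :
      ((k : ℝ) * (∏ j, #(F i j).support : ℕ)) ^ 2 ≤ k ^ 2 * f.natDegree ^ (2 * m) := by
    have : ((∏ j, #(F i j).support : ℕ) : ℝ) ≤ f.natDegree ^ m := by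
      exact_mod_cast (prod_le_pow_card _ _ _ fun j _ => hbig i j).trans_eq (by simp)
    rw [mul_pow, pow_mul']
    gcongr
  have hcount : (f.natDegree : ℝ) ≤ ∑ i, ∑ j, (#(F i j).support : ℝ) := by
    exact_mod_cast hslc.natDegree_le_sum_sum_card_support hC hf hFnonneg (by simpa using hKC)
  have hsum : ∑ _i : Fin k, ∑ _j : Fin m, (f.natDegree : ℝ) / (k * m) ≤
      ∑ i, ∑ j, (#(F i j).support : ℝ) := by
    simpa [field] using hcount
  obtain ⟨i, -, hi⟩ := exists_le_of_sum_le univ_nonempty hsum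
  obtain ⟨j, -, hj⟩ := exists_le_of_sum_le univ_nonempty hi
  exact ⟨i, j, hj⟩
end

section
/- Let f = g·h where g, h ∈ ℝ⁺[X] each have at most t nonzero monomials. If f satisfies the Kurtz condition a_i^2 > 4 a_{i-1} a_{i+1} for all i ∈ {1,...,deg(f) - 1} (where a_i are the coefficients of f), then deg(f) ≤ 2t. -/
/-!
Kurtz: if `p` has positive coefficients `a_j` with `a_{j+1}^2 > 4 a_j a_{j+2}`, the ratios
`a_j / a_{j+1}` grow at least fourfold, so at `s = 2 a_i / a_{i+1}` the terms `a_j s^j` of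
`p(-s)` increase up to `j = i + 1`, decrease afterwards, and the peak term exceeds the sum of its
two neighbours. Hence `p(-s)` has the sign of `(-1)^(i+1)`, which together with `p(0) > 0` gives
`deg p` sign changes and so `deg p` real roots.

The Kurtz condition on `f = g h` forces `f_1, …, f_d > 0`, so `f` splits over `ℝ` (after
removing a factor `X` if `f_0 = 0`), and so do its divisors `g` and `h`. A split polynomial with
nonnegative coefficients has no positive roots, so once the power of `X` is removed it is a
positive multiple of a product of factors `X + r` with `r > 0` and has no zero coefficient
below its degree: `deg g + 1 ≤ #supp g + ord₀ g`, and likewise for `h`. Adding, with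
`ord₀ f ≤ 1`, gives `deg f + 1 ≤ 2t`.
-/

open Polynomial Finset

section AlternatingSums

variable {R : Type*} [CommRing R] [LinearOrder R] [IsStrictOrderedRing R]

theorem Antitone.alternating_sum_range_mem_Icc {c : ℕ → R} (hc : Antitone c)
    (hc0 : ∀ k, 0 ≤ c k) (M : ℕ) :
    ∑ k ∈ range M, (-1) ^ k * c k ∈ Set.Icc 0 (c 0) := by
  induction M generalizing c with
  | zero => simpa using hc0 0
  | succ M ih =>
    have hshift : ∑ k ∈ range (M + 1), (-1) ^ k * c k
        = c 0 - ∑ k ∈ range M, (-1) ^ k * c (k + 1) := by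
      simp [sum_range_succ', pow_succ, sub_eq_neg_add]
    obtain ⟨hlo, hhi⟩ := ih (c := fun k ↦ c (k + 1)) (fun a b hab ↦ hc (by omega))
      (fun k ↦ hc0 (k + 1))
    rw [hshift]
    exact ⟨by linarith [hc (Nat.zero_le 1)], by linarith⟩

theorem alternating_sum_range_pos_of_peak {T : ℕ → R} {m n : ℕ} (hmn : m < n)
    (hT : ∀ j, 0 ≤ T j) (hup : ∀ j < m, T j ≤ T (j + 1))
    (hdown : ∀ j, m + 1 < j → T (j + 1) ≤ T j) (hpeak : T m + T (m + 2) < T (m + 1)) :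
    0 < (-1) ^ (m + 1) * ∑ j ∈ range (n + 1), (-1) ^ j * T j := by
  have hsign : ∀ j, (-1 : R) ^ (m + 1) * (-1) ^ j = (-1) ^ (m + 1 + j) := fun j ↦
    (pow_add ..).symm
  have hleft : (-1) ^ (m + 1) * ∑ j ∈ range (m + 1), (-1) ^ j * T j
      = -∑ k ∈ range (m + 1), (-1) ^ k * T (m - k) := by
    rw [← sum_range_reflect, mul_sum, ← sum_neg_distrib]
    refine sum_congr rfl fun k hk ↦ ?_
    have hkm : m + 1 - 1 - k = m - k := by omega
    have hpar : m + 1 + (m - k) = k + 1 + 2 * (m - k) := by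
      have := mem_range.1 hk; omega
    rw [hkm, ← mul_assoc, hsign, hpar, pow_add, pow_mul, neg_one_sq, one_pow, pow_succ]
    ring
  have hright : (-1) ^ (m + 1) *
        ∑ k ∈ range (n - m - 1), (-1) ^ (m + 1 + 1 + k) * T (m + 1 + 1 + k)
      = -∑ k ∈ range (n - m - 1), (-1) ^ k * T (m + 2 + k) := by
    rw [mul_sum, ← sum_neg_distrib]
    refine sum_congr rfl fun k _ ↦ ?_
    rw [← mul_assoc, hsign, show m + 1 + (m + 1 + 1 + k) = k + 1 + 2 * (m + 1) by omega,
      pow_add, pow_mul, neg_one_sq, one_pow, pow_succ, show m + 1 + 1 + k = m + 2 + k by omega]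
    ring
  have hmid : (-1) ^ (m + 1) * ((-1) ^ (m + 1) * T (m + 1)) = T (m + 1) := by
    rw [← mul_assoc, hsign, ← two_mul, pow_mul, neg_one_sq, one_pow, one_mul]
  have hleft_le := (Antitone.alternating_sum_range_mem_Icc (c := fun k ↦ T (m - k))
    (fun a b hab ↦ (monotoneOn_of_le_add_one Set.ordConnected_Iic
      (fun j _ _ hj ↦ hup j (by simpa using hj)) (by simp) (by simp) (by omega) :
        T (m - b) ≤ T (m - a))) (fun k ↦ hT _) (m + 1)).2
  have hright_le := (Antitone.alternating_sum_range_mem_Icc (c := fun k ↦ T (m + 2 + k))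
    (antitone_nat_of_succ_le fun k ↦ hdown (m + 2 + k) (by omega)) (fun k ↦ hT _) (n - m - 1)).2
  rw [show n + 1 = m + 1 + 1 + (n - m - 1) by omega, sum_range_add, sum_range_succ, mul_add,
    mul_add, hleft, hright, hmid]
  simp only [Nat.sub_zero, add_zero] at hleft_le hright_le
  linarith

end AlternatingSums

namespace Polynomial

section OrderedCoeffs

variable {R : Type*} [Semiring R] [PartialOrder R]

theorem coeff_nonneg_of_forall_le_natDegree [IsOrderedRing R] {p : R[X]}
    (hp : ∀ i ≤ p.natDegree, 0 < p.coeff i) (i : ℕ) : 0 ≤ p.coeff i := by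
  rcases le_or_gt i p.natDegree with hi | hi
  · exact (hp i hi).le
  · exact (coeff_eq_zero_of_natDegree_lt hi).ge

theorem coeff_mul_nonneg [IsOrderedRing R] {p q : R[X]} (hp : ∀ n, 0 ≤ p.coeff n)
    (hq : ∀ n, 0 ≤ q.coeff n) (n : ℕ) : 0 ≤ (p * q).coeff n := by
  rw [coeff_mul]
  exact sum_nonneg fun x _ ↦ mul_nonneg (hp _) (hq _)

theorem coeff_zero_le_eval [IsOrderedRing R] {p : R[X]} (hp : ∀ n, 0 ≤ p.coeff n) {x : R}
    (hx : 0 ≤ x) : p.coeff 0 ≤ p.eval x := by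
  rw [eval_eq_sum_range]
  simpa using single_le_sum (f := fun i ↦ p.coeff i * x ^ i)
    (fun i _ ↦ mul_nonneg (hp i) (pow_nonneg hx i)) (mem_range.2 (Nat.succ_pos _))

theorem coeff_mul_pos_of_forall_le_natDegree [IsStrictOrderedRing R] {p q : R[X]}
    (hp : ∀ i ≤ p.natDegree, 0 < p.coeff i) (hq : ∀ i ≤ q.natDegree, 0 < q.coeff i) :
    ∀ i ≤ (p * q).natDegree, 0 < (p * q).coeff i := by
  intro i hi
  rw [natDegree_mul' (mul_pos (hp _ le_rfl) (hq _ le_rfl)).ne'] at hi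
  set j := min i p.natDegree
  rw [coeff_mul]
  calc 0 < p.coeff j * q.coeff (i - j) := mul_pos (hp j (min_le_right _ _)) (hq _ (by omega))
    _ ≤ ∑ x ∈ antidiagonal i, p.coeff x.1 * q.coeff x.2 :=
      single_le_sum (f := fun x ↦ p.coeff x.1 * q.coeff x.2)
        (fun x _ ↦ mul_nonneg (coeff_nonneg_of_forall_le_natDegree hp _)
          (coeff_nonneg_of_forall_le_natDegree hq _))
        (a := (j, i - j)) (HasAntidiagonal.mem_antidiagonal.2 (by simp only; omega))

end OrderedCoeffs

theorem exists_isRoot_mem_Ioo_of_eval_mul_eval_neg (p : ℝ[X]) {a b : ℝ} (hab : a ≤ b)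
    (h : p.eval a * p.eval b < 0) : ∃ r ∈ Set.Ioo a b, p.IsRoot r := by
  have hcont := p.continuous.continuousOn (s := Set.Icc a b)
  rcases mul_neg_iff.1 h with ⟨ha, hb⟩ | ⟨ha, hb⟩
  · exact intermediate_value_Ioo' hab hcont ⟨hb, ha⟩
  · exact intermediate_value_Ioo hab hcont ⟨ha, hb⟩

theorem le_card_roots_of_sign_changes {p : ℝ[X]} {x : ℕ → ℝ} {n : ℕ}
    (hx : StrictAntiOn x (Set.Iic n)) (hsign : ∀ i < n, p.eval (x i) * p.eval (x (i + 1)) < 0) :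
    n ≤ p.roots.card := by
  rcases Nat.eq_zero_or_pos n with rfl | hn
  · exact Nat.zero_le _
  have hp : p ≠ 0 := by
    rintro rfl
    simpa using hsign 0 hn
  have hroot : ∀ i, ∃ r, i < n → r ∈ Set.Ioo (x (i + 1)) (x i) ∧ p.IsRoot r := by
    intro i
    by_cases hi : i < n
    · obtain ⟨r, hr, hroot⟩ := exists_isRoot_mem_Ioo_of_eval_mul_eval_neg p
        (show x (i + 1) < x i from
          hx (Set.mem_Iic.2 (by omega)) (Set.mem_Iic.2 (by omega)) (by omega)).le
        (by rw [mul_comm]; exact hsign i hi)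
      exact ⟨r, fun _ ↦ ⟨hr, hroot⟩⟩
    · exact ⟨0, fun h ↦ absurd h hi⟩
  choose r hr using hroot
  have hinj : Set.InjOn r (range n) := by
    refine StrictAntiOn.injOn fun i hi j hj hij ↦ ?_
    simp only [coe_range, Set.mem_Iio] at hi hj
    calc r j < x j := (hr j hj).1.2
      _ ≤ x (i + 1) := hx.antitoneOn (Set.mem_Iic.2 (by omega)) (Set.mem_Iic.2 (by omega)) hij
      _ < r i := (hr i hi).1.1
  calc n = #(range n) := (card_range n).symm
    _ ≤ #p.roots.toFinset := card_le_card_of_injOn r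
        (fun i hi ↦ Multiset.mem_toFinset.2 ((mem_roots hp).2 (hr i (mem_range.1 hi)).2)) hinj
    _ ≤ p.roots.card := Multiset.toFinset_card_le _

structure IsKurtz (p : ℝ[X]) : Prop where
  coeff_pos : ∀ i ≤ p.natDegree, 0 < p.coeff i
  sq_gt : ∀ i, i + 2 ≤ p.natDegree → 4 * (p.coeff i * p.coeff (i + 2)) < p.coeff (i + 1) ^ 2

namespace IsKurtz

variable {p : ℝ[X]}

theorem four_mul_ratio_lt (hp : p.IsKurtz) {i : ℕ} (hi : i + 2 ≤ p.natDegree) :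
    4 * (p.coeff i / p.coeff (i + 1)) < p.coeff (i + 1) / p.coeff (i + 2) := by
  rw [mul_div_assoc', div_lt_div_iff₀ (hp.coeff_pos _ (by omega)) (hp.coeff_pos _ hi)]
  nlinarith [hp.sq_gt i hi]

theorem ratio_monotoneOn (hp : p.IsKurtz) :
    MonotoneOn (fun i ↦ p.coeff i / p.coeff (i + 1)) (Set.Iio p.natDegree) := by
  refine monotoneOn_of_le_add_one Set.ordConnected_Iio fun i _ _ hi ↦ ?_
  have hi : i + 2 ≤ p.natDegree := Set.mem_Iio.1 hi
  have : 0 ≤ p.coeff i / p.coeff (i + 1) :=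
    div_nonneg (coeff_nonneg_of_forall_le_natDegree hp.coeff_pos _)
      (coeff_nonneg_of_forall_le_natDegree hp.coeff_pos _)
  linarith [hp.four_mul_ratio_lt hi]

theorem coeff_le_ratio_mul_coeff (hp : p.IsKurtz) {i j : ℕ} (hji : j ≤ i)
    (hi : i < p.natDegree) : p.coeff j ≤ p.coeff i / p.coeff (i + 1) * p.coeff (j + 1) := by
  have hratio : p.coeff j / p.coeff (j + 1) ≤ p.coeff i / p.coeff (i + 1) :=
    hp.ratio_monotoneOn (Set.mem_Iio.2 (by omega)) (Set.mem_Iio.2 hi) hji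
  rwa [div_le_iff₀ (hp.coeff_pos _ (by omega))] at hratio

theorem four_mul_ratio_mul_coeff_lt (hp : p.IsKurtz) {i j : ℕ} (hij : i < j)
    (hj : j ≤ p.natDegree) : 4 * (p.coeff i / p.coeff (i + 1)) * p.coeff (j + 1) < p.coeff j := by
  rcases hj.lt_or_eq with hj | rfl
  · have hratio : p.coeff (i + 1) / p.coeff (i + 2) ≤ p.coeff j / p.coeff (j + 1) :=
      hp.ratio_monotoneOn (Set.mem_Iio.2 (by omega)) (Set.mem_Iio.2 hj) (by omega)
    rw [← lt_div_iff₀ (hp.coeff_pos _ hj)]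
    exact (hp.four_mul_ratio_lt (by omega)).trans_le hratio
  · rw [coeff_eq_zero_of_natDegree_lt (Nat.lt_succ_self _), mul_zero]
    exact hp.coeff_pos _ le_rfl

theorem neg_one_pow_mul_eval_pos (hp : p.IsKurtz) {i : ℕ} (hi : i < p.natDegree) :
    0 < (-1) ^ (i + 1) * p.eval (-(2 * (p.coeff i / p.coeff (i + 1)))) := by
  set r := p.coeff i / p.coeff (i + 1) with hr_def
  set T : ℕ → ℝ := fun j ↦ p.coeff j * (2 * r) ^ j with hT_def
  have hr : 0 < r := div_pos (hp.coeff_pos i hi.le) (hp.coeff_pos (i + 1) hi)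
  have hnn := coeff_nonneg_of_forall_le_natDegree hp.coeff_pos
  have hT : ∀ j, 0 ≤ T j := fun j ↦ mul_nonneg (hnn j) (by positivity)
  have hT_succ : ∀ j, T (j + 1) = p.coeff (j + 1) * (2 * r) * (2 * r) ^ j := fun j ↦ by
    simp only [hT_def]; ring
  have hup : ∀ j < i, T j ≤ T (j + 1) := fun j hj ↦ by
    have := hp.coeff_le_ratio_mul_coeff hj.le hi
    rw [hT_succ]
    exact mul_le_mul_of_nonneg_right (by nlinarith [mul_nonneg hr.le (hnn (j + 1))])
      (by positivity)
  have hdown : ∀ j, i + 1 < j → T (j + 1) ≤ T j := fun j hj ↦ by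
    rcases le_or_gt j p.natDegree with hjn | hjn
    · have := hp.four_mul_ratio_mul_coeff_lt (by omega : i < j) hjn
      rw [hT_succ]
      exact mul_le_mul_of_nonneg_right (by nlinarith [mul_nonneg hr.le (hnn (j + 1))])
        (by positivity)
    · rw [show T (j + 1) = 0 by
        simp [hT_def, coeff_eq_zero_of_natDegree_lt (hjn.trans (Nat.lt_succ_self j))]]
      exact hT j
  have hpeak : T i + T (i + 2) < T (i + 1) := by
    have hmid : p.coeff (i + 1) * (2 * r) = 2 * p.coeff i := by
      rw [hr_def, mul_left_comm, mul_div_cancel₀ _ (hp.coeff_pos (i + 1) hi).ne']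
    have hlast : p.coeff (i + 2) * (2 * r) ^ 2 < p.coeff i := by
      nlinarith [hp.four_mul_ratio_mul_coeff_lt (Nat.lt_succ_self i) hi]
    have : T (i + 2) < T i :=
      calc T (i + 2) = p.coeff (i + 2) * (2 * r) ^ 2 * (2 * r) ^ i := by simp only [hT_def]; ring
        _ < p.coeff i * (2 * r) ^ i := by gcongr
    rw [hT_succ i, hmid]
    simp only [hT_def] at this ⊢
    linarith
  have heval : p.eval (-(2 * r)) = ∑ j ∈ range (p.natDegree + 1), (-1) ^ j * T j := by
    rw [eval_eq_sum_range]
    exact sum_congr rfl fun j _ ↦ by rw [neg_pow]; ring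
  rw [heval]
  exact alternating_sum_range_pos_of_peak hi hT hup hdown hpeak

theorem splits (hp : p.IsKurtz) : p.Splits := by
  let x : ℕ → ℝ := fun
    | 0 => 0
    | i + 1 => -(2 * (p.coeff i / p.coeff (i + 1)))
  have hsign : ∀ i ≤ p.natDegree, 0 < (-1) ^ i * p.eval (x i)
    | 0, _ => by simpa [x, ← coeff_zero_eq_eval_zero] using hp.coeff_pos 0 (Nat.zero_le _)
    | i + 1, hi => hp.neg_one_pow_mul_eval_pos hi
  have hx : StrictAntiOn x (Set.Iic p.natDegree) := strictAntiOn_Iic_of_succ_lt fun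
    | 0, h => by
      have := div_pos (hp.coeff_pos 0 (Nat.zero_le _)) (hp.coeff_pos 1 (Nat.succ_le_of_lt h))
      simp only [x, Order.succ_eq_add_one]
      linarith
    | i + 1, h => by
      have := div_pos (hp.coeff_pos i (by omega)) (hp.coeff_pos (i + 1) (by omega))
      have := hp.four_mul_ratio_lt (Nat.succ_le_of_lt h)
      simp only [x, Order.succ_eq_add_one]
      linarith
  have hroots := le_card_roots_of_sign_changes hx fun i hi ↦ by
    have hsq : (-1 : ℝ) ^ i * (-1) ^ i = 1 := by
      rw [← pow_add, ← two_mul, pow_mul, neg_one_sq, one_pow]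
    have key : (-1 : ℝ) ^ i * p.eval (x i) * ((-1) ^ (i + 1) * p.eval (x (i + 1)))
        = -(p.eval (x i) * p.eval (x (i + 1))) := by
      rw [pow_succ]; linear_combination -(p.eval (x i) * p.eval (x (i + 1))) * hsq
    linarith [mul_pos (hsign i hi.le) (hsign (i + 1) hi)]
  exact splits_iff_card_roots.2 (le_antisymm (card_roots' p) hroots)

end IsKurtz

section NonnegKurtz

variable {f : ℝ[X]}

theorem coeff_succ_pos_of_sq_gt (hnn : ∀ n, 0 ≤ f.coeff n)
    (hk : ∀ i, i + 2 ≤ f.natDegree → 4 * (f.coeff i * f.coeff (i + 2)) < f.coeff (i + 1) ^ 2)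
    {i : ℕ} (hi : i + 2 ≤ f.natDegree) : 0 < f.coeff (i + 1) := by
  refine (hnn _).lt_of_ne' fun h ↦ ?_
  have := hk i hi
  rw [h] at this
  nlinarith [mul_nonneg (hnn i) (hnn (i + 2))]

theorem natTrailingDegree_le_one_of_sq_gt (hnn : ∀ n, 0 ≤ f.coeff n)
    (hk : ∀ i, i + 2 ≤ f.natDegree →
      4 * (f.coeff i * f.coeff (i + 2)) < f.coeff (i + 1) ^ 2) :
    f.natTrailingDegree ≤ 1 := by
  rcases le_or_gt f.natDegree 1 with hd | hd
  · exact (natTrailingDegree_le_natDegree f).trans hd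
  · exact natTrailingDegree_le_of_ne_zero (coeff_succ_pos_of_sq_gt hnn hk (i := 0) hd).ne'

theorem splits_of_coeff_nonneg_of_sq_gt (hnn : ∀ n, 0 ≤ f.coeff n)
    (hk : ∀ i, i + 2 ≤ f.natDegree →
      4 * (f.coeff i * f.coeff (i + 2)) < f.coeff (i + 1) ^ 2) :
    f.Splits := by
  rcases eq_or_ne f 0 with rfl | hf0
  · exact Splits.zero
  have hpos : ∀ i < f.natDegree, 0 < f.coeff (i + 1) := fun i hi ↦ by
    rcases Nat.lt_or_ge (i + 1) f.natDegree with hi' | hi'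
    · exact coeff_succ_pos_of_sq_gt hnn hk hi'
    · rw [show i + 1 = f.natDegree by omega]
      exact (hnn _).lt_of_ne' (leadingCoeff_ne_zero.2 hf0)
  rcases (hnn 0).lt_or_eq with h0 | h0
  · exact IsKurtz.splits ⟨fun | 0, _ => h0 | i + 1, hi => hpos i hi, hk⟩
  have hX : f = X * f.divX := by simpa [← h0] using (X_mul_divX_add f).symm
  have hd : 0 < f.natDegree :=
    Nat.pos_of_ne_zero fun hd ↦ hf0 (by rw [eq_C_of_natDegree_eq_zero hd, ← h0, C_0])
  have hdeg : f.divX.natDegree = f.natDegree - 1 := natDegree_divX_eq_natDegree_tsub_one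
  rw [hX]
  refine Splits.X.mul (IsKurtz.splits ⟨fun i hi ↦ ?_, fun i hi ↦ ?_⟩)
  · rw [coeff_divX]
    exact hpos i (by omega)
  · simp only [coeff_divX]
    exact hk (i + 1) (by omega)

end NonnegKurtz

theorem coeff_pos_of_splits {p : ℝ[X]} (hs : p.Splits) (hnn : ∀ n, 0 ≤ p.coeff n)
    (h0 : p.coeff 0 ≠ 0) : ∀ i ≤ p.natDegree, 0 < p.coeff i := by
  have hp0 : p ≠ 0 := fun h ↦ h0 (by simp [h])
  have hroots : ∀ a ∈ p.roots, a < 0 := fun a ha ↦ by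
    by_contra! ha0
    have := coeff_zero_le_eval hnn ha0
    rw [(mem_roots hp0).1 ha] at this
    exact h0 (le_antisymm this (hnn 0))
  have hprod : ∀ i ≤ (p.roots.map (fun a ↦ X - C a)).prod.natDegree,
      0 < (p.roots.map (fun a ↦ X - C a)).prod.coeff i := by
    refine Multiset.prod_induction (fun q : ℝ[X] ↦ ∀ i ≤ q.natDegree, 0 < q.coeff i) _
      (fun _ _ ↦ coeff_mul_pos_of_forall_le_natDegree) (by simp) fun q hq ↦ ?_
    obtain ⟨a, ha, rfl⟩ := Multiset.mem_map.1 hq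
    intro i hi
    rw [natDegree_X_sub_C] at hi
    interval_cases i <;> simp [hroots a ha]
  have hlc : 0 < p.leadingCoeff := (hnn _).lt_of_ne' (leadingCoeff_ne_zero.2 hp0)
  rw [hs.eq_prod_roots, natDegree_C_mul hlc.ne']
  intro i hi
  rw [coeff_C_mul]
  exact mul_pos hlc (hprod i hi)

theorem natDegree_add_one_le_card_support_add_natTrailingDegree {p : ℝ[X]} (hp0 : p ≠ 0)
    (hs : p.Splits) (hnn : ∀ n, 0 ≤ p.coeff n) :
    p.natDegree + 1 ≤ #p.support + p.natTrailingDegree := by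
  set k := p.natTrailingDegree
  obtain ⟨q, hpq⟩ : X ^ k ∣ p :=
    X_pow_dvd_iff.2 fun d hd ↦ coeff_eq_zero_of_lt_natTrailingDegree hd
  have hq0 : q ≠ 0 := by rintro rfl; exact hp0 (by simpa using hpq)
  have hcoeff : ∀ i, p.coeff (i + k) = q.coeff i := fun i ↦ by rw [hpq, coeff_X_pow_mul]
  have hqpos := coeff_pos_of_splits (hs.of_dvd hp0 ⟨X ^ k, by rw [hpq, mul_comm]⟩)
    (fun i ↦ hcoeff i ▸ hnn _)
    (by rw [← hcoeff, zero_add]; exact trailingCoeff_nonzero_iff_nonzero.2 hp0)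
  have hdeg : p.natDegree = k + q.natDegree := by
    rw [hpq, natDegree_mul (pow_ne_zero _ X_ne_zero) hq0, natDegree_X_pow]
  have hsub : (range (q.natDegree + 1)).map (addRightEmbedding k) ⊆ p.support := fun i hi ↦ by
    obtain ⟨j, hj, rfl⟩ := mem_map.1 hi
    rw [mem_support_iff, addRightEmbedding_apply, hcoeff]
    exact (hqpos j (Nat.lt_succ_iff.1 (mem_range.1 hj))).ne'
  have := card_le_card hsub
  rw [card_map, card_range] at this
  omega

end Polynomial

/-- If `f = g·h` with `g, h` having nonnegative coefficients and at most `t` monomials each,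
and `f` satisfies the Kurtz condition, then `deg f ≤ 2t`. -/
theorem kurtz_product_degree_bound (t : ℕ) (g h : Polynomial ℝ)
    (hg : ∀ n, 0 ≤ g.coeff n) (hh : ∀ n, 0 ≤ h.coeff n)
    (hgt : g.support.card ≤ t) (hht : h.support.card ≤ t)
    (f : Polynomial ℝ) (hf : f = g * h)
    (hkurtz : ∀ i : ℕ, 1 ≤ i → i ≤ f.natDegree - 1 →
      (f.coeff i) ^ 2 > 4 * (f.coeff (i - 1) * f.coeff (i + 1))) :
    f.natDegree ≤ 2 * t := by
  have hk : ∀ i, i + 2 ≤ f.natDegree →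
      4 * (f.coeff i * f.coeff (i + 2)) < f.coeff (i + 1) ^ 2 :=
    fun i hi ↦ by simpa using hkurtz (i + 1) (by omega) (by omega)
  rcases eq_or_ne g 0 with rfl | hg0
  · simp [hf]
  rcases eq_or_ne h 0 with rfl | hh0
  · simp [hf]
  have hnn : ∀ n, 0 ≤ f.coeff n := hf ▸ coeff_mul_nonneg hg hh
  have hf0 : f ≠ 0 := hf ▸ mul_ne_zero hg0 hh0
  have hfs : f.Splits := splits_of_coeff_nonneg_of_sq_gt hnn hk
  have hg_card := natDegree_add_one_le_card_support_add_natTrailingDegree hg0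
    (hfs.of_dvd hf0 ⟨h, hf⟩) hg
  have hh_card := natDegree_add_one_le_card_support_add_natTrailingDegree hh0
    (hfs.of_dvd hf0 ⟨g, hf.trans (mul_comm g h)⟩) hh
  have htrail := natTrailingDegree_le_one_of_sq_gt hnn hk
  rw [hf, natTrailingDegree_mul hg0 hh0] at htrail
  rw [hf, natDegree_mul hg0 hh0]
  omega
end
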